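/- arXiv:1812.06735 — 8 statements merged into one kernel-verified Lean document; each statement's English description precedes it below -/
import Mathlib

section
/- Let A be a K-approximate subgroup and B an L-approximate subgroup of a group G. Then for every m, n ≥ 2 the set A^m ∩ B^n is covered by at most K^(m-1) L^(n-1) left translates of A² ∩ B². -/
open Finset Pointwise

private lemma pow_subset_aux {G : Type*} [Group G] [DecidableEq G]
    (A XA : Finset G) (hAcov : A * A ⊆ XA * A) :
    ∀ k : ℕ, A ^ (k + 1) ⊆ XA ^ k * A := by
  intro k
  induction k with
  | zero => simp
  | succ k ih =>
    calc A ^ (k + 2) = A ^ (k + 1) * A := by rw [pow_succ]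
    _ ⊆ (XA ^ k * A) * A := mul_subset_mul_right ih
    _ = XA ^ k * (A * A) := by rw [mul_assoc]
    _ ⊆ XA ^ k * (XA * A) := mul_subset_mul_left hAcov
    _ = XA ^ (k + 1) * A := by rw [pow_succ, mul_assoc]

theorem slicing_covering {G : Type*} [Group G] [DecidableEq G]
    (A B : Finset G) (K L : ℝ) (hK : 1 ≤ K) (hL : 1 ≤ L)
    (hAsym : A⁻¹ = A) (hA1 : (1 : G) ∈ A) (hBsym : B⁻¹ = B) (hB1 : (1 : G) ∈ B)
    (XA : Finset G) (hXA : (XA.card : ℝ) ≤ K) (hAcov : A * A ⊆ XA * A)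
    (XB : Finset G) (hXB : (XB.card : ℝ) ≤ L) (hBcov : B * B ⊆ XB * B)
    (m n : ℕ) (hm : 2 ≤ m) (hn : 2 ≤ n) :
    ∃ T : Finset G, (T.card : ℝ) ≤ K ^ (m - 1) * L ^ (n - 1) ∧
      A ^ m ∩ B ^ n ⊆ T * (A ^ 2 ∩ B ^ 2) := by
  have hAm : A ^ m ⊆ XA ^ (m - 1) * A := by
    have := pow_subset_aux A XA hAcov (m - 1)
    rwa [Nat.sub_add_cancel (by omega)] at this
  have hBn : B ^ n ⊆ XB ^ (n - 1) * B := by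
    have := pow_subset_aux B XB hBcov (n - 1)
    rwa [Nat.sub_add_cancel (by omega)] at this
  set S : G → G → Finset G := fun x y => ((A ^ m ∩ B ^ n) ∩ (x • A)) ∩ (y • B) with hS
  classical
  set f : G × G → G := fun p =>
    if h : (S p.1 p.2).Nonempty then h.choose else 1 with hf
  refine ⟨((XA ^ (m - 1)) ×ˢ (XB ^ (n - 1))).image f, ?_, ?_⟩
  · calc ((( (XA ^ (m - 1)) ×ˢ (XB ^ (n - 1))).image f).card : ℝ)
        ≤ (((XA ^ (m - 1)) ×ˢ (XB ^ (n - 1))).card : ℝ) := by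
          exact_mod_cast Finset.card_image_le
    _ = ((XA ^ (m - 1)).card : ℝ) * ((XB ^ (n - 1)).card : ℝ) := by
          rw [Finset.card_product]; push_cast; ring
    _ ≤ K ^ (m - 1) * L ^ (n - 1) := by
          have h1 : ((XA ^ (m - 1)).card : ℝ) ≤ (XA.card : ℝ) ^ (m - 1) := by
            exact_mod_cast Finset.card_pow_le
          have h2 : ((XB ^ (n - 1)).card : ℝ) ≤ (XB.card : ℝ) ^ (n - 1) := by
            exact_mod_cast Finset.card_pow_le
          have h3 : (XA.card : ℝ) ^ (m - 1) ≤ K ^ (m - 1) :=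
            pow_le_pow_left₀ (by positivity) hXA _
          have h4 : (XB.card : ℝ) ^ (n - 1) ≤ L ^ (n - 1) :=
            pow_le_pow_left₀ (by positivity) hXB _
          have : (0:ℝ) ≤ ((XB ^ (n - 1)).card : ℝ) := by positivity
          nlinarith [pow_nonneg (le_trans zero_le_one hK) (m-1),
            pow_nonneg (show (0:ℝ) ≤ (XA.card:ℝ) by positivity) (m-1)]
  · intro w hw
    obtain ⟨x, hx, a, ha, hxa⟩ := Finset.mem_mul.1 (hAm (Finset.mem_inter.1 hw).1)
    obtain ⟨y, hy, b, hb, hyb⟩ := Finset.mem_mul.1 (hBn (Finset.mem_inter.1 hw).2)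
    have hwS : w ∈ S x y := by
      simp only [hS, Finset.mem_inter]
      exact ⟨⟨(Finset.mem_inter.1 hw), Finset.mem_smul_finset.2 ⟨a, ha, hxa⟩⟩,
        Finset.mem_smul_finset.2 ⟨b, hb, hyb⟩⟩
    have hne : (S x y).Nonempty := ⟨w, hwS⟩
    have hz : f (x, y) ∈ S x y := by
      simp only [hf, dif_pos hne]
      exact hne.choose_spec
    set z := f (x, y) with hzdef
    simp only [hS, Finset.mem_inter] at hz hwS
    obtain ⟨a', ha', hxa'⟩ := Finset.mem_smul_finset.1 hz.1.2
    obtain ⟨b', hb', hyb'⟩ := Finset.mem_smul_finset.1 hz.2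
    refine Finset.mem_mul.2 ⟨z, ?_, z⁻¹ * w, ?_, by group⟩
    · exact Finset.mem_image.2 ⟨(x, y), Finset.mem_product.2 ⟨hx, hy⟩, rfl⟩
    · refine Finset.mem_inter.2 ⟨?_, ?_⟩
      · have : z⁻¹ * w = a'⁻¹ * a := by
          rw [← hxa, ← hxa']; simp only [smul_eq_mul]; group
        rw [this, sq]
        exact Finset.mul_mem_mul (by rw [← hAsym]; exact Finset.inv_mem_inv ha') ha
      · have : z⁻¹ * w = b'⁻¹ * b := by
          rw [← hyb, ← hyb']; simp only [smul_eq_mul]; group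
        rw [this, sq]
        exact Finset.mul_mem_mul (by rw [← hBsym]; exact Finset.inv_mem_inv hb') hb
end

section
/- Let A be a K-approximate subgroup and B an L-approximate subgroup of a group G. Then for every m, n ≥ 2 the set A^m ∩ B^n is a K^(2m-1) L^(2n-1)-approximate group. -/
open Finset Pointwise

theorem slicing_approx_group {G : Type*} [Group G] [DecidableEq G]
    (A B : Finset G) (K L : ℝ) (hK : 1 ≤ K) (hL : 1 ≤ L)
    (hAsym : A⁻¹ = A) (hA1 : (1 : G) ∈ A) (hBsym : B⁻¹ = B) (hB1 : (1 : G) ∈ B)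
    (XA : Finset G) (hXA : (XA.card : ℝ) ≤ K) (hAcov : A * A ⊆ XA * A)
    (XB : Finset G) (hXB : (XB.card : ℝ) ≤ L) (hBcov : B * B ⊆ XB * B)
    (m n : ℕ) (hm : 2 ≤ m) (hn : 2 ≤ n) :
    (A ^ m ∩ B ^ n)⁻¹ = A ^ m ∩ B ^ n ∧ (1 : G) ∈ A ^ m ∩ B ^ n ∧
      ∃ X : Finset G, (X.card : ℝ) ≤ K ^ (2 * m - 1) * L ^ (2 * n - 1) ∧
        (A ^ m ∩ B ^ n) * (A ^ m ∩ B ^ n) ⊆ X * (A ^ m ∩ B ^ n) := by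
  -- generic covering lemma for iterated powers
  have hpow : ∀ (S X : Finset G), S * S ⊆ X * S → ∀ k : ℕ, S ^ (k + 1) ⊆ X ^ k * S := by
    intro S X hcov k
    induction k with
    | zero => simp
    | succ k ih =>
      calc S ^ (k + 2) = S ^ (k + 1) * S := by rw [pow_succ]
        _ ⊆ (X ^ k * S) * S := mul_subset_mul_right ih
        _ = X ^ k * (S * S) := by rw [mul_assoc]
        _ ⊆ X ^ k * (X * S) := mul_subset_mul_left hcov
        _ = X ^ (k + 1) * S := by rw [pow_succ, mul_assoc]
  -- A * A ⊆ A ^ m and similarly for B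
  have hsq : ∀ (S : Finset G), (1 : G) ∈ S → ∀ k, 2 ≤ k → S * S ⊆ S ^ k := by
    intro S hS k hk
    have : S * S ⊆ (S * S) * S ^ (k - 2) := subset_mul_left _ (one_mem_pow hS)
    refine this.trans ?_
    have : (S * S) * S ^ (k - 2) = S ^ k := by
      rw [← sq, ← pow_add]
      congr 1
      omega
    rw [this]
  refine ⟨?_, ?_, ?_⟩
  · rw [inv_inter, ← inv_pow, ← inv_pow, hAsym, hBsym]
  · exact mem_inter.2 ⟨one_mem_pow hA1, one_mem_pow hB1⟩
  · classical
    set P := (XA ^ (2 * m - 1)) ×ˢ (XB ^ (2 * n - 1)) with hP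
    refine ⟨P.image fun p =>
      if h : ((p.1 • A) ∩ (p.2 • B)).Nonempty then h.choose else 1, ?_, ?_⟩
    · calc ((P.image _).card : ℝ) ≤ (P.card : ℝ) := by exact_mod_cast card_image_le
        _ = ((XA ^ (2 * m - 1)).card : ℝ) * ((XB ^ (2 * n - 1)).card : ℝ) := by
            rw [hP, card_product]; push_cast; ring
        _ ≤ (XA.card : ℝ) ^ (2 * m - 1) * (XB.card : ℝ) ^ (2 * n - 1) := by
            gcongr <;> exact_mod_cast card_pow_le
        _ ≤ K ^ (2 * m - 1) * L ^ (2 * n - 1) := by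
            gcongr <;> positivity
    · intro g hg
      -- g lies in A ^ (2m) and B ^ (2n)
      have hgA : g ∈ A ^ (2 * m) := by
        have : (A ^ m ∩ B ^ n) * (A ^ m ∩ B ^ n) ⊆ A ^ m * A ^ m :=
          mul_subset_mul inter_subset_left inter_subset_left
        have h2 : A ^ m * A ^ m = A ^ (2 * m) := by rw [← pow_add, two_mul]
        exact h2 ▸ this hg
      have hgB : g ∈ B ^ (2 * n) := by
        have : (A ^ m ∩ B ^ n) * (A ^ m ∩ B ^ n) ⊆ B ^ n * B ^ n :=
          mul_subset_mul inter_subset_right inter_subset_right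
        have h2 : B ^ n * B ^ n = B ^ (2 * n) := by rw [← pow_add, two_mul]
        exact h2 ▸ this hg
      have hmA : g ∈ XA ^ (2 * m - 1) * A := by
        have h1 : 2 * m = (2 * m - 1) + 1 := by omega
        exact hpow A XA hAcov (2 * m - 1) (h1 ▸ hgA)
      have hmB : g ∈ XB ^ (2 * n - 1) * B := by
        have h1 : 2 * n = (2 * n - 1) + 1 := by omega
        exact hpow B XB hBcov (2 * n - 1) (h1 ▸ hgB)
      obtain ⟨x, hx, a, ha, hxa⟩ := mem_mul.1 hmA
      obtain ⟨y, hy, b, hb, hyb⟩ := mem_mul.1 hmB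
      have hgx : g ∈ x • A := by
        rw [← hxa]; exact smul_mem_smul_finset ha
      have hgy : g ∈ y • B := by
        rw [← hyb]; exact smul_mem_smul_finset hb
      have hne : ((x • A) ∩ (y • B)).Nonempty := ⟨g, mem_inter.2 ⟨hgx, hgy⟩⟩
      set g₀ := hne.choose with hg₀
      have hg₀mem := hne.choose_spec
      rw [mem_inter] at hg₀mem
      obtain ⟨a₀, ha₀, hxa₀⟩ := mem_smul_finset.1 hg₀mem.1
      obtain ⟨b₀, hb₀, hyb₀⟩ := mem_smul_finset.1 hg₀mem.2
      have hA2 : g₀⁻¹ * g ∈ A ^ m := by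
        have : g₀⁻¹ * g = a₀⁻¹ * a := by
          rw [hg₀, ← hxa₀, ← hxa]; simp only [smul_eq_mul]; group
        rw [this]
        have ha₀' : a₀⁻¹ ∈ A := by rw [← hAsym]; exact inv_mem_inv ha₀
        exact hsq A hA1 m hm (mul_mem_mul ha₀' ha)
      have hB2 : g₀⁻¹ * g ∈ B ^ n := by
        have : g₀⁻¹ * g = b₀⁻¹ * b := by
          rw [hg₀, ← hyb₀, ← hyb]; simp only [smul_eq_mul]; group
        rw [this]
        have hb₀' : b₀⁻¹ ∈ B := by rw [← hBsym]; exact inv_mem_inv hb₀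
        exact hsq B hB1 n hn (mul_mem_mul hb₀' hb)
      have hg₀X : g₀ ∈ P.image fun p =>
          if h : ((p.1 • A) ∩ (p.2 • B)).Nonempty then h.choose else 1 := by
        refine mem_image.2 ⟨(x, y), ?_, ?_⟩
        · exact mem_product.2 ⟨hx, hy⟩
        · simp only [dif_pos hne]; rfl
      have : g = g₀ * (g₀⁻¹ * g) := by group
      rw [this]
      exact mul_mem_mul hg₀X (mem_inter.2 ⟨hA2, hB2⟩)
end

section
/- Let G be a group with a subgroup H, let A ⊆ G be a finite set, and suppose A is contained in a union of k left cosets of H. Then A is contained in a union of at most k left translates of A⁻¹A ∩ H. -/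
open Finset Pointwise

theorem fibre_pigeonhole {G : Type*} [Group G] [DecidableEq G]
    (H : Subgroup G) (A : Finset G) (k : ℕ)
    (T : Finset G) (hT : T.card ≤ k)
    (hcov : (A : Set G) ⊆ ⋃ x ∈ T, x • (H : Set G)) :
    ∃ T' : Finset G, T'.card ≤ k ∧
      (A : Set G) ⊆ ⋃ x ∈ T', x • ((↑(A⁻¹ * A) : Set G) ∩ (H : Set G)) := by
  classical
  set f : G → G := fun x =>
    if h : ∃ a ∈ A, a ∈ x • (H : Set G) then h.choose else 1 with hf
  refine ⟨T.image f, le_trans (card_image_le) hT, ?_⟩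
  intro b hb
  have hb' := hcov hb
  simp only [Set.mem_iUnion] at hb'
  obtain ⟨x, hx, hbx⟩ := hb'
  have hex : ∃ a ∈ A, a ∈ x • (H : Set G) := ⟨b, hb, hbx⟩
  obtain ⟨ha, hax⟩ := hex.choose_spec
  set a := hex.choose
  have hfx : f x = a := by rw [hf]; exact dif_pos hex
  simp only [Set.mem_iUnion]
  refine ⟨a, ?_, ?_⟩
  · rw [← hfx]; exact mem_image_of_mem f hx
  · obtain ⟨h1, hh1, ha1⟩ := hax
    obtain ⟨h2, hh2, hb2⟩ := hbx
    simp only [smul_eq_mul] at ha1 hb2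
    refine ⟨a⁻¹ * b, ⟨?_, ?_⟩, by simp [smul_eq_mul]⟩
    · push_cast
      exact Set.mul_mem_mul (Set.inv_mem_inv.2 ha) hb
    · rw [← ha1, ← hb2]
      have : (x * h1)⁻¹ * (x * h2) = h1⁻¹ * h2 := by group
      rw [this]
      exact H.mul_mem (H.inv_mem hh1) hh2
end

section
/- Let A be a K-approximate subgroup of a group, let G be a group, and suppose φ : A → G is a centred Freiman 3-homomorphism. Then the image φ(A) is a K-approximate subgroup of G. -/
/-!
Testing `φ a · φ a⁻¹ · φ 1 = φ 1 · φ 1 · φ 1` shows that a centred Freiman 3-homomorphism commutes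
with inversion on a symmetric set, so `φ(A)` is symmetric. Moreover `φ` extends to a well-defined map
`ψ` on `A³` by `ψ(abc) = φ(a)φ(b)φ(c)`. If `ab = xc` with `x ∈ X` and `c ∈ A`, then `x = abc⁻¹ ∈ A³`
and `φ(a)φ(b) = ψ(x)φ(c)`, so the at most `K` elements of `ψ(X)` translate `φ(A)` to cover `φ(A)²`.
-/

open Finset Pointwise

def IsFreiman3Hom {H G : Type*} [Mul H] [Mul G] (A : Set H) (φ : H → G) : Prop :=
  ∀ x₁ ∈ A, ∀ x₂ ∈ A, ∀ x₃ ∈ A, ∀ y₁ ∈ A, ∀ y₂ ∈ A, ∀ y₃ ∈ A,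
    x₁ * x₂ * x₃ = y₁ * y₂ * y₃ → φ x₁ * φ x₂ * φ x₃ = φ y₁ * φ y₂ * φ y₃

namespace IsFreiman3Hom

lemma exists_extension_mul_mul {H G : Type*} [Mul H] [Mul G] {A : Set H} {φ : H → G}
    (hφ : IsFreiman3Hom A φ) :
    ∃ ψ : H → G, ∀ a ∈ A, ∀ b ∈ A, ∀ c ∈ A, ψ (a * b * c) = φ a * φ b * φ c := by
  classical
  let IsRep : H → H × H × H → Prop := fun x t =>
    t.1 ∈ A ∧ t.2.1 ∈ A ∧ t.2.2 ∈ A ∧ t.1 * t.2.1 * t.2.2 = x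
  refine ⟨fun x => if h : ∃ t, IsRep x t then
    φ h.choose.1 * φ h.choose.2.1 * φ h.choose.2.2 else φ x, fun a ha b hb c hc => ?_⟩
  have hrep : ∃ t, IsRep (a * b * c) t := ⟨(a, b, c), ha, hb, hc, rfl⟩
  obtain ⟨ha', hb', hc', habc⟩ := hrep.choose_spec
  simp only [dif_pos hrep]
  exact hφ _ ha' _ hb' _ hc' a ha b hb c hc habc

variable {H G : Type*} [Group H] [Group G] {A : Set H} {φ : H → G}

lemma map_inv (hφ : IsFreiman3Hom A φ) (hone : 1 ∈ A) (hφ1 : φ 1 = 1) {a : H} (ha : a ∈ A)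
    (ha' : a⁻¹ ∈ A) : φ a⁻¹ = (φ a)⁻¹ := by
  have h := hφ a ha a⁻¹ ha' 1 hone 1 hone 1 hone 1 hone (by group)
  simp only [hφ1, mul_one] at h
  exact eq_inv_of_mul_eq_one_right h

variable [DecidableEq H] [DecidableEq G] {A : Finset H}

lemma image_inv_eq (hφ : IsFreiman3Hom (A : Set H) φ) (hsym : A⁻¹ = A) (hone : 1 ∈ A)
    (hφ1 : φ 1 = 1) : (A.image φ)⁻¹ = A.image φ := by
  have hinv : ∀ a ∈ A, a⁻¹ ∈ A := fun a ha => hsym ▸ inv_mem_inv ha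
  calc (A.image φ)⁻¹ = A.image (fun a => φ a⁻¹) := by
        rw [← image_inv_eq_inv, image_image]
        exact image_congr fun a ha => (hφ.map_inv hone hφ1 ha (hinv a ha)).symm
    _ = A⁻¹.image φ := by rw [← image_inv_eq_inv, image_image]; rfl
    _ = A.image φ := by rw [hsym]

lemma image_mul_image_subset (hφ : IsFreiman3Hom (A : Set H) φ) (hsym : A⁻¹ = A)
    (hone : 1 ∈ A) (hφ1 : φ 1 = 1) {ψ : H → G}
    (hψ : ∀ a ∈ A, ∀ b ∈ A, ∀ c ∈ A, ψ (a * b * c) = φ a * φ b * φ c)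
    {X : Finset H} (hcov : A * A ⊆ X * A) :
    A.image φ * A.image φ ⊆ X.image ψ * A.image φ := by
  intro g hg
  obtain ⟨_, ha', _, hb', rfl⟩ := mem_mul.1 hg
  obtain ⟨a, ha, rfl⟩ := mem_image.1 ha'
  obtain ⟨b, hb, rfl⟩ := mem_image.1 hb'
  obtain ⟨x, hx, c, hc, hxc⟩ := mem_mul.1 (hcov (mul_mem_mul ha hb))
  have hc' : c⁻¹ ∈ A := hsym ▸ inv_mem_inv hc
  have hx_eq : x = a * b * c⁻¹ := by rw [← hxc]; group
  have hab : φ a * φ b = ψ x * φ c := by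
    rw [hx_eq, hψ a ha b hb c⁻¹ hc', hφ.map_inv hone hφ1 hc hc']
    group
  rw [hab]
  exact mul_mem_mul (mem_image_of_mem ψ hx) (mem_image_of_mem φ hc)

end IsFreiman3Hom

theorem freiman_image_approx_group_general {H G : Type*} [Group H] [DecidableEq H] [Group G] [DecidableEq G]
    (A : Finset H) (K : ℝ)
    (hsym : A⁻¹ = A) (hone : (1 : H) ∈ A)
    (X : Finset H) (hX : (X.card : ℝ) ≤ K) (hcov : A * A ⊆ X * A)
    (φ : H → G)
    (hhom : ∀ x₁ ∈ A, ∀ x₂ ∈ A, ∀ x₃ ∈ A, ∀ y₁ ∈ A, ∀ y₂ ∈ A, ∀ y₃ ∈ A,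
      x₁ * x₂ * x₃ = y₁ * y₂ * y₃ → φ x₁ * φ x₂ * φ x₃ = φ y₁ * φ y₂ * φ y₃)
    (hcentred : φ 1 = 1) :
    (A.image φ)⁻¹ = A.image φ ∧ (1 : G) ∈ A.image φ ∧
      ∃ Y : Finset G, (Y.card : ℝ) ≤ K ∧ A.image φ * A.image φ ⊆ Y * A.image φ := by
  have hφ : IsFreiman3Hom (A : Set H) φ := hhom
  obtain ⟨ψ, hψ⟩ := hφ.exists_extension_mul_mul
  refine ⟨hφ.image_inv_eq hsym hone hcentred, hcentred ▸ mem_image_of_mem φ hone, X.image ψ,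
    (Nat.cast_le.2 card_image_le).trans hX, hφ.image_mul_image_subset hsym hone hcentred hψ hcov⟩

theorem freiman_image_approx_group {H G : Type*} [Group H] [DecidableEq H] [Group G] [DecidableEq G]
    (A : Finset H) (K : ℝ) (hK : 1 ≤ K)
    (hsym : A⁻¹ = A) (hone : (1 : H) ∈ A)
    (X : Finset H) (hX : (X.card : ℝ) ≤ K) (hcov : A * A ⊆ X * A)
    (φ : H → G)
    (hhom : ∀ x₁ ∈ A, ∀ x₂ ∈ A, ∀ x₃ ∈ A, ∀ y₁ ∈ A, ∀ y₂ ∈ A, ∀ y₃ ∈ A,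
      x₁ * x₂ * x₃ = y₁ * y₂ * y₃ → φ x₁ * φ x₂ * φ x₃ = φ y₁ * φ y₂ * φ y₃)
    (hcentred : φ 1 = 1) :
    (A.image φ)⁻¹ = A.image φ ∧ (1 : G) ∈ A.image φ ∧
      ∃ Y : Finset G, (Y.card : ℝ) ≤ K ∧ A.image φ * A.image φ ⊆ Y * A.image φ :=
  freiman_image_approx_group_general A K hsym hone X hX hcov φ hhom hcentred
end

section
/- Let G be a group, N a normal subgroup, π : G → G/N the quotient map, and A a finite symmetric subset of G containing the identity. Let P ⊆ π(A^m) with |P| ≥ c|π(A)| for some c > 0. Then |π⁻¹(P) ∩ A^(m+2)| ≥ c|A|. -/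
open Finset Pointwise

theorem pullback_large {G : Type*} [Group G] [DecidableEq G]
    (N : Subgroup G) [N.Normal] [DecidableEq (G ⧸ N)]
    (A : Finset G) (hsym : A⁻¹ = A) (hone : (1 : G) ∈ A)
    (m : ℕ) (c : ℝ) (hc : 0 < c)
    (P : Finset (G ⧸ N)) (hP : (P : Set (G ⧸ N)) ⊆ (QuotientGroup.mk' N) '' ↑(A ^ m))
    (hPc : c * (A.image (QuotientGroup.mk' N)).card ≤ P.card) :
    c * A.card ≤ ((A ^ (m + 2)).filter (fun a => QuotientGroup.mk' N a ∈ P)).card := by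
  classical
  set π := (QuotientGroup.mk' N : G →* G ⧸ N) with hπ
  have hA : A.Nonempty := ⟨1, hone⟩
  have himg : (A.image π).Nonempty := hA.image _
  obtain ⟨q, hq, hqmax⟩ := Finset.exists_max_image (A.image π)
    (fun q => (A.filter fun a => π a = q).card) himg
  set F := A.filter (fun a => π a = q) with hF
  have h1 : A.card ≤ (A.image π).card * F.card := by
    have hsum := Finset.card_eq_sum_card_fiberwise (f := π) (s := A) (t := A.image π)
      (fun a ha => Finset.mem_image_of_mem _ ha)
    rw [hsum]
    calc ∑ b ∈ A.image π, (A.filter fun a => π a = b).card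
        ≤ ∑ _b ∈ A.image π, F.card := Finset.sum_le_sum (fun b hb => hqmax b hb)
      _ = (A.image π).card * F.card := by rw [Finset.sum_const, smul_eq_mul]
  obtain ⟨a₀, ha₀A, ha₀⟩ := Finset.mem_image.1 hq
  have ha₀inv : a₀⁻¹ ∈ A := by rw [← hsym, Finset.mem_inv']; simpa
  have hrep : ∀ p ∈ P, ∃ x ∈ (A ^ m : Finset G), π x = p := by
    intro p hp
    obtain ⟨x, hx, hxp⟩ := hP hp
    exact ⟨x, hx, hxp⟩
  choose! f hf hfp using hrep
  have h3 : (P ×ˢ F).card ≤ ((A ^ (m + 2)).filter (fun a => π a ∈ P)).card := by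
    apply Finset.card_le_card_of_injOn (fun pa => f pa.1 * pa.2 * a₀⁻¹)
    · rintro ⟨p, a⟩ hpa
      rw [Finset.mem_coe, Finset.mem_product] at hpa
      obtain ⟨hp, haF⟩ := hpa
      rw [hF, Finset.mem_filter] at haF
      obtain ⟨haA, haq⟩ := haF
      rw [Finset.mem_coe, Finset.mem_filter]
      constructor
      · have hpow : (A : Finset G) ^ (m + 2) = A ^ m * A * A := by
          rw [pow_succ, pow_succ]
        rw [hpow]
        exact Finset.mul_mem_mul (Finset.mul_mem_mul (hf p hp) haA) ha₀inv
      · simpa [map_mul, map_inv, hfp p hp, haq, ha₀] using hp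
    · rintro ⟨p, a⟩ hpa ⟨p', a'⟩ hpa' heq
      simp only [Finset.coe_product, Set.mem_prod, Finset.mem_coe, hF,
        Finset.mem_filter] at hpa hpa'
      simp only at heq
      have hpp : p = p' := by
        have hcongr := congrArg π heq
        simpa [map_mul, map_inv, hfp p hpa.1, hfp p' hpa'.1, hpa.2.2, hpa'.2.2] using hcongr
      subst hpp
      have haa : a = a' := mul_left_cancel (mul_right_cancel heq)
      simp [haa]
  have h2 : ((P.card : ℝ) * F.card) ≤
      (((A ^ (m + 2)).filter fun a => π a ∈ P).card : ℝ) := by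
    have h3' := h3
    rw [Finset.card_product] at h3'
    exact_mod_cast h3'
  have hFnn : (0 : ℝ) ≤ (F.card : ℝ) := Nat.cast_nonneg _
  calc c * A.card ≤ c * ((A.image π).card * F.card) := by
        apply mul_le_mul_of_nonneg_left _ hc.le
        exact_mod_cast h1
    _ = (c * (A.image π).card) * F.card := by ring
    _ ≤ P.card * F.card := mul_le_mul_of_nonneg_right hPc hFnn
    _ ≤ _ := h2
end

section
/- Let G be an s-step nilpotent group, write π : G → G/[G,G] for the abelianization quotient, and let x ∈ G/[G,G]. Then the subgroup π⁻¹(⟨x⟩) of G is nilpotent of step at most s − 1. -/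
open Subgroup
open scoped commutatorElement

lemma comm_le_aux {G : Type*} [Group G] (x : Abelianization G) :
    ⁅Subgroup.comap (Abelianization.of (G := G)) (Subgroup.zpowers x),
     Subgroup.comap (Abelianization.of (G := G)) (Subgroup.zpowers x)⁆ ≤
      (⊤ : Subgroup G).lowerCentralSeries 2 := by
  obtain ⟨g, rfl⟩ := QuotientGroup.mk_surjective x
  set H := Subgroup.comap (Abelianization.of (G := G)) (Subgroup.zpowers (QuotientGroup.mk g))
  rw [Subgroup.commutator_le]
  -- quotient map to G ⧸ γ₂
  set N := (⊤ : Subgroup G).lowerCentralSeries 2 with hN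
  have hnorm : N.Normal := inferInstance
  set φ := QuotientGroup.mk' N with hφ
  intro a ha b hb
  -- decompositions
  have key : ∀ c, c ∈ H → ∃ i : ℤ, ∃ u ∈ (⊤ : Subgroup G).lowerCentralSeries 1, c = u * g ^ i := by
    intro c hc
    obtain ⟨i, hi⟩ := hc
    refine ⟨i, c * (g ^ i)⁻¹, ?_, by group⟩
    rw [Subgroup.top_lowerCentralSeries_one, ← QuotientGroup.eq_one_iff]
    have : (QuotientGroup.mk (c * (g ^ i)⁻¹) : Abelianization G)
        = Abelianization.of c * (Abelianization.of g ^ i)⁻¹ := by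
      simp [map_mul, map_zpow]
      rfl
    rw [this]
    have hi' : (Abelianization.of g) ^ i = Abelianization.of c := hi
    rw [hi']
    group
    rfl
  obtain ⟨i, u, hu, rfl⟩ := key a ha
  obtain ⟨j, v, hv, rfl⟩ := key b hb
  -- work in quotient
  suffices h : φ ⁅u * g ^ i, v * g ^ j⁆ = 1 by
    rwa [hφ, QuotientGroup.mk'_apply, QuotientGroup.eq_one_iff] at h
  have central : ∀ w ∈ (⊤ : Subgroup G).lowerCentralSeries 1, ∀ z : G,
      φ w * φ z = φ z * φ w := by
    intro w hw z
    have : ⁅w, z⁆ ∈ N := by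
      rw [hN, Subgroup.lowerCentralSeries_succ]
      exact Subgroup.subset_closure ⟨w, hw, z, Subgroup.mem_top z, rfl⟩
    have h2 : φ ⁅w, z⁆ = 1 := by
      rw [hφ, QuotientGroup.mk'_apply, QuotientGroup.eq_one_iff]; exact this
    rw [map_commutatorElement] at h2
    exact commutatorElement_eq_one_iff_mul_comm.mp h2
  rw [map_commutatorElement, commutatorElement_eq_one_iff_mul_comm]
  simp only [map_mul, map_zpow]
  have cu' : ∀ z : G ⧸ N, Commute (φ u) z := by
    intro z; obtain ⟨w, rfl⟩ := QuotientGroup.mk'_surjective N z; exact central u hu w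
  have cv' : ∀ z : G ⧸ N, Commute (φ v) z := by
    intro z; obtain ⟨w, rfl⟩ := QuotientGroup.mk'_surjective N z; exact central v hv w
  exact Commute.eq (Commute.mul_left (cu' _)
    (Commute.mul_right ((cv' (φ g ^ i)).symm) ((Commute.refl (φ g)).zpow_zpow i j)))

theorem preimage_cyclic_lower_step {G : Type*} [Group G] (s : ℕ) (hs : 2 ≤ s)
    (hG : (⊤ : Subgroup G).lowerCentralSeries s = ⊥) (x : Abelianization G) :
    (⊤ : Subgroup
      (↥(Subgroup.comap (Abelianization.of (G := G)) (Subgroup.zpowers x)))).lowerCentralSeries (s - 1) = ⊥ := by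
  set H := Subgroup.comap (Abelianization.of (G := G)) (Subgroup.zpowers x) with hH
  have main : ∀ n : ℕ, ((⊤ : Subgroup ↥H).lowerCentralSeries (n + 1)).map H.subtype
      ≤ (⊤ : Subgroup G).lowerCentralSeries (n + 2) := by
    intro n
    induction n with
    | zero =>
      have h1 : (⊤ : Subgroup ↥H).lowerCentralSeries 1 = ⁅(⊤ : Subgroup ↥H), (⊤ : Subgroup ↥H)⁆ := by
        rw [Subgroup.top_lowerCentralSeries_one, commutator_def]
      rw [h1, Subgroup.map_commutator]
      have htop : (⊤ : Subgroup ↥H).map H.subtype = H := by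
        rw [← MonoidHom.range_eq_map, Subgroup.range_subtype]
      rw [htop]
      exact comm_le_aux x
    | succ n ih =>
      have e1 : (⊤ : Subgroup ↥H).lowerCentralSeries (n + 2) = ⁅(⊤ : Subgroup ↥H).lowerCentralSeries (n + 1), ⊤⁆ := rfl
      have e2 : (⊤ : Subgroup G).lowerCentralSeries (n + 3) = ⁅(⊤ : Subgroup G).lowerCentralSeries (n + 2), ⊤⁆ := rfl
      rw [e1, Subgroup.map_commutator, e2]
      exact Subgroup.commutator_mono ih le_top
  obtain ⟨m, rfl⟩ : ∃ m, s = m + 2 := ⟨s - 2, by omega⟩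
  have h1 : ((⊤ : Subgroup ↥H).lowerCentralSeries (m + 1)).map H.subtype ≤ ⊥ := hG ▸ main m
  have h2 : ((⊤ : Subgroup ↥H).lowerCentralSeries (m + 1)).map H.subtype = ⊥ := le_bot_iff.mp h1
  rw [Subgroup.map_eq_bot_iff, Subgroup.ker_subtype, le_bot_iff] at h2
  simpa using h2
end

section
/- Let N be a nilpotent subgroup of the group of invertible upper-triangular n×n complex matrices of step s. Then N embeds into a direct product (ℝⁿ/ℤⁿ) × Γ where Γ is a torsion-free nilpotent group of step at most s. -/
open Subgroup
open scoped commutatorElement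

private lemma my_lcs_map_surj {G H : Type*} [Group G] [Group H] (f : G →* H)
    (hf : Function.Surjective f) (n : ℕ) :
    Subgroup.map f ((⊤ : Subgroup G).lowerCentralSeries n) = (⊤ : Subgroup H).lowerCentralSeries n := by
  induction n with
  | zero => simpa using Subgroup.map_top_of_surjective f hf
  | succ d ih =>
      show Subgroup.map f ⁅(⊤ : Subgroup G).lowerCentralSeries d, ⊤⁆ = ⁅(⊤ : Subgroup H).lowerCentralSeries d, ⊤⁆
      rw [Subgroup.map_commutator, ih, Subgroup.map_top_of_surjective f hf]

/-- central torsion elements form a subgroup -/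
private def centralTorsion (G : Type*) [Group G] : Subgroup G where
  carrier := {g | g ∈ center G ∧ ∃ k : ℕ, k ≠ 0 ∧ g ^ k = 1}
  one_mem' := ⟨Subgroup.one_mem _, 1, one_ne_zero, one_pow 1⟩
  mul_mem' := by
    rintro a b ⟨ha, k, hk, hak⟩ ⟨hb, l, hl, hbl⟩
    refine ⟨mul_mem ha hb, k * l, Nat.mul_ne_zero hk hl, ?_⟩
    have hcomm : Commute a b := (Subgroup.mem_center_iff.mp ha b).symm
    rw [hcomm.mul_pow, pow_mul a, pow_mul' b, hak, hbl, one_pow, one_pow, one_mul]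
  inv_mem' := by
    rintro a ⟨ha, k, hk, hak⟩
    exact ⟨inv_mem ha, k, hk, by rw [inv_pow, hak, inv_one]⟩

private lemma torsion_of_closure : ∀ (s : ℕ) (G : Type) (_ : Group G) (S : Set G),
    (⊤ : Subgroup G).lowerCentralSeries s = ⊥ → Subgroup.closure S = ⊤ →
    (∀ g ∈ S, ∃ k : ℕ, k ≠ 0 ∧ g ^ k = 1) → ∀ t : G, ∃ k : ℕ, k ≠ 0 ∧ t ^ k = 1 := by
  intro s
  induction s with
  | zero =>
    intro G _ S hlcs _ _ t
    have ht : t ∈ (⊥ : Subgroup G) := hlcs ▸ Subgroup.mem_top t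
    exact ⟨1, one_ne_zero, by simpa using ht⟩
  | succ c ih =>
    intro G _ S hlcs hgen htor t
    -- the previous term is central
    have hZcent : ∀ z ∈ (⊤ : Subgroup G).lowerCentralSeries c, ∀ g : G, g * z = z * g := by
      intro z hz g
      have : ⁅z, g⁆ ∈ (⊥ : Subgroup G) := by
        rw [← hlcs]
        exact Subgroup.commutator_mem_commutator hz (Subgroup.mem_top g)
      have h1 : ⁅z, g⁆ = 1 := by simpa using this
      exact (commutatorElement_eq_one_iff_mul_comm.mp h1).symm
    -- every element of `(⊤ : Subgroup G).lowerCentralSeries c` is torsion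
    have hZtor : ∀ z ∈ (⊤ : Subgroup G).lowerCentralSeries c, ∃ k : ℕ, k ≠ 0 ∧ z ^ k = 1 := by
      cases c with
      | zero =>
        -- G is abelian, closure of torsion set
        intro z _
        have hcent : ∀ g : G, g ∈ center G := by
          intro g
          rw [Subgroup.mem_center_iff]
          intro h
          exact hZcent g (by simp [Subgroup.lowerCentralSeries_zero]) h
        have : z ∈ centralTorsion G := by
          have hle : Subgroup.closure S ≤ centralTorsion G := by
            rw [Subgroup.closure_le]
            intro g hg
            exact ⟨hcent g, htor g hg⟩
          exact hle (hgen ▸ Subgroup.mem_top z)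
        exact this.2
      | succ c' =>
        intro z hz
        rw [Subgroup.mem_lowerCentralSeries_succ_iff] at hz
        have hle : Subgroup.closure {x : G | ∃ p ∈ (⊤ : Subgroup G).lowerCentralSeries c', ∃ q ∈ (⊤ : Subgroup G), p * q * p⁻¹ * q⁻¹ = x}
            ≤ centralTorsion G := by
          rw [Subgroup.closure_le]
          rintro x ⟨p, hp, q, -, rfl⟩
          have hxmem : ∀ r : G, p * r * p⁻¹ * r⁻¹ ∈ (⊤ : Subgroup G).lowerCentralSeries (c' + 1) := by
            intro r
            have := Subgroup.commutator_mem_commutator hp (Subgroup.mem_top r)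
            rwa [commutatorElement_def] at this
          have hxcent : ∀ r : G, p * r * p⁻¹ * r⁻¹ ∈ center G := by
            intro r
            rw [Subgroup.mem_center_iff]
            intro g
            exact hZcent _ (hxmem r) g
          -- the map r ↦ ⁅p, r⁆ is a homomorphism
          have hmul : ∀ a b : G, p * (a * b) * p⁻¹ * (a * b)⁻¹
              = (p * a * p⁻¹ * a⁻¹) * (p * b * p⁻¹ * b⁻¹) := by
            intro a b
            have hid : p * (a * b) * p⁻¹ * (a * b)⁻¹
                = (p * a * p⁻¹ * a⁻¹) * (a * (p * b * p⁻¹ * b⁻¹) * a⁻¹) := by group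
            rw [hid, Subgroup.mem_center_iff.mp (hxcent b) a]
            group
          let φ : G →* G := MonoidHom.mk' (fun r => p * r * p⁻¹ * r⁻¹) hmul
          refine ⟨hxcent q, ?_⟩
          -- torsion of φ q by closure induction
          have : ∀ r : G, φ r ∈ centralTorsion G := by
            intro r
            have hr : r ∈ Subgroup.closure S := hgen ▸ Subgroup.mem_top r
            induction hr using Subgroup.closure_induction with
            | mem g hg =>
              obtain ⟨k, hk, hgk⟩ := htor g hg
              exact ⟨hxcent g, k, hk, by rw [← map_pow φ g k, hgk, map_one]⟩
            | one => simpa using (centralTorsion G).one_mem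
            | mul a b _ _ hia hib => rw [map_mul]; exact mul_mem hia hib
            | inv a _ hia => rw [map_inv]; exact inv_mem hia
          exact (this q).2
        exact (hle hz).2
    -- pass to the quotient by `(⊤ : Subgroup G).lowerCentralSeries c`
    set Z := (⊤ : Subgroup G).lowerCentralSeries c with hZ
    let π := QuotientGroup.mk' Z
    have hπs : Function.Surjective π := QuotientGroup.mk'_surjective Z
    have hq1 : (⊤ : Subgroup (G ⧸ Z)).lowerCentralSeries c = ⊥ := by
      rw [← my_lcs_map_surj π hπs c]
      rw [Subgroup.map_eq_bot_iff, QuotientGroup.ker_mk']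
    have hq2 : Subgroup.closure (π '' S) = ⊤ := by
      rw [← MonoidHom.map_closure, hgen, Subgroup.map_top_of_surjective π hπs]
    have hq3 : ∀ g ∈ π '' S, ∃ k : ℕ, k ≠ 0 ∧ g ^ k = 1 := by
      rintro g ⟨x, hx, rfl⟩
      obtain ⟨k, hk, hxk⟩ := htor x hx
      exact ⟨k, hk, by rw [← map_pow, hxk, map_one]⟩
    obtain ⟨m, hm, hmt⟩ := ih (G ⧸ Z) _ (π '' S) hq1 hq2 hq3 (π t)
    have htm : t ^ m ∈ Z := by
      have : π (t ^ m) = 1 := by rw [map_pow]; exact hmt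
      rwa [← QuotientGroup.ker_mk' Z, MonoidHom.mem_ker]
    obtain ⟨j, hj, hjt⟩ := hZtor _ htm
    exact ⟨m * j, Nat.mul_ne_zero hm hj, by rw [pow_mul]; exact hjt⟩

private lemma strict_pow_zero {n : ℕ} (u : Matrix (Fin n) (Fin n) ℂ)
    (h : ∀ i j : Fin n, (j : ℕ) ≤ i → u i j = 0) :
    ∀ (m : ℕ) (i j : Fin n), (j : ℕ) < (i : ℕ) + m → (u ^ m) i j = 0 := by
  intro m
  induction m with
  | zero =>
    intro i j hij
    simp only [Nat.add_zero] at hij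
    rw [pow_zero]
    exact Matrix.one_apply_ne (by rintro rfl; omega)
  | succ d ih =>
    intro i j hij
    rw [pow_succ, Matrix.mul_apply]
    apply Finset.sum_eq_zero
    intro k _
    by_cases hk : (k : ℕ) < (i : ℕ) + d
    · rw [ih i k hk, zero_mul]
    · rw [h k j (by omega), mul_zero]

private lemma strict_nilpotent {n : ℕ} (u : Matrix (Fin n) (Fin n) ℂ)
    (h : ∀ i j : Fin n, (j : ℕ) ≤ i → u i j = 0) : u ^ n = 0 := by
  ext i j
  rw [strict_pow_zero u h n i j (by omega)]
  simp

private lemma unipotent_pow_eq_one {n k : ℕ} (A : Matrix (Fin n) (Fin n) ℂ)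
    (hlow : ∀ i j : Fin n, j < i → A i j = 0) (hdiag : ∀ i, A i i = 1)
    (hk : k ≠ 0) (h1 : A ^ k = 1) : A = 1 := by
  set u := A - 1 with hu
  have hstrict : ∀ i j : Fin n, (j : ℕ) ≤ i → u i j = 0 := by
    intro i j hij
    rcases eq_or_lt_of_le hij with heq | hlt
    · have hji : j = i := Fin.ext heq
      subst hji
      rw [hu, Matrix.sub_apply, hdiag, Matrix.one_apply_eq, sub_self]
    · have hji : j < i := hlt
      have hne : i ≠ j := by intro h; subst h; exact lt_irrefl _ hji
      rw [hu, Matrix.sub_apply, hlow i j hji, Matrix.one_apply_ne hne, sub_zero]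
  have hA : A = 1 + u := by rw [hu]; abel
  -- binomial-style expansion
  have hbin : ∀ m : ℕ, ∃ w : Matrix (Fin n) (Fin n) ℂ,
      Commute u w ∧ (1 + u) ^ m = 1 + (m : ℂ) • u + u ^ 2 * w := by
    intro m
    induction m with
    | zero => exact ⟨0, Commute.zero_right u, by simp⟩
    | succ d ih =>
      obtain ⟨w, hcw, hw⟩ := ih
      have hc1 : Commute u ((d : ℂ) • (1 : Matrix (Fin n) (Fin n) ℂ)) :=
        (Commute.one_right u).smul_right _
      have hc2 : Commute u (w * u) := hcw.mul_right (Commute.refl u)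
      refine ⟨(d : ℂ) • 1 + w + w * u, (hc1.add_right hcw).add_right hc2, ?_⟩
      rw [pow_succ, hw]
      push_cast
      rw [add_smul, one_smul]
      simp only [mul_add, add_mul, one_mul, mul_one, smul_mul_assoc, mul_smul_comm,
        mul_assoc, pow_two]
      abel
  obtain ⟨w, hcw, hw⟩ := hbin k
  rw [← hA, h1] at hw
  have hku : (k : ℂ) • u = -(u ^ 2 * w) := by
    have := hw
    have h0 : 0 = (k : ℂ) • u + u ^ 2 * w := by
      have := congrArg (fun X => X - 1) hw
      simpa [add_assoc] using this
    linear_combination (norm := noncomm_ring) -h0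
  have hkne : (k : ℂ) ≠ 0 := Nat.cast_ne_zero.mpr hk
  set w₂ := (-(k : ℂ)⁻¹) • w with hw₂
  have hueq : u = u ^ 2 * w₂ := by
    rw [hw₂, Matrix.mul_smul]
    rw [show u ^ 2 * w = -((k : ℂ) • u) from by rw [hku, neg_neg]]
    rw [smul_neg, neg_smul, neg_neg, smul_smul, inv_mul_cancel₀ hkne, one_smul]
  have hiter : ∀ m : ℕ, u = u ^ (m + 1) * w₂ ^ m := by
    intro m
    induction m with
    | zero => simp
    | succ d ih =>
      have hstep : u ^ (d + 1) = u ^ (d + 2) * w₂ := by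
        calc u ^ (d + 1) = u ^ d * u := pow_succ u d
        _ = u ^ d * (u ^ 2 * w₂) := by rw [← hueq]
        _ = u ^ (d + 2) * w₂ := by rw [← mul_assoc, ← pow_add]
      calc u = u ^ (d + 1) * w₂ ^ d := ih
      _ = (u ^ (d + 2) * w₂) * w₂ ^ d := by rw [hstep]
      _ = u ^ (d + 2) * w₂ ^ (d + 1) := by rw [mul_assoc, ← pow_succ']
  have hu0 : u = 0 := by
    have := hiter n
    rw [pow_succ', strict_nilpotent u hstrict] at this
    simpa using this
  rw [hA, hu0, add_zero]

open Complex in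
private lemma argCircle_mul (z w : ℂ) (hz : z ≠ 0) (hw : w ≠ 0) :
    ((Complex.arg (z * w) / (2 * Real.pi) : ℝ) : AddCircle (1 : ℝ)) =
      ((Complex.arg z / (2 * Real.pi) : ℝ) : AddCircle (1 : ℝ))
        + ((Complex.arg w / (2 * Real.pi) : ℝ) : AddCircle (1 : ℝ)) := by
  have h := Complex.arg_mul_coe_angle hz hw
  rw [← Real.Angle.coe_add] at h
  obtain ⟨k, hk⟩ := Real.Angle.angle_eq_iff_two_pi_dvd_sub.mp h
  have hpi : (2 * Real.pi) ≠ 0 := by positivity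
  have hre : (Complex.arg (z * w) / (2 * Real.pi) : ℝ)
      = Complex.arg z / (2 * Real.pi) + Complex.arg w / (2 * Real.pi) + (k : ℝ) := by
    field_simp
    linarith [hk]
  rw [hre, AddCircle.coe_add, AddCircle.coe_add]
  have hk0 : (((k : ℝ)) : AddCircle (1 : ℝ)) = 0 :=
    (AddCircle.coe_eq_zero_iff _).mpr ⟨k, by simp⟩
  rw [hk0, add_zero]

private lemma argCircle_eq_zero {z : ℂ}
    (h : ((Complex.arg z / (2 * Real.pi) : ℝ) : AddCircle (1 : ℝ)) = 0) :
    Complex.arg z = 0 := by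
  obtain ⟨m, hm⟩ := (AddCircle.coe_eq_zero_iff _).mp h
  have hpi := Real.pi_pos
  have habs := Complex.abs_arg_le_pi z
  have hm' : Complex.arg z = (m : ℝ) * (2 * Real.pi) := by
    have : (m : ℝ) * 1 = Complex.arg z / (2 * Real.pi) := by
      simpa using hm
    field_simp at this
    linarith
  have hm0 : m = 0 := by
    rcases lt_trichotomy m 0 with hlt | heq | hgt
    · have : (m : ℝ) ≤ -1 := by exact_mod_cast (by omega : m ≤ -1)
      rw [hm', abs_le] at habs
      nlinarith [habs.1]
    · exact heq
    · have : (1 : ℝ) ≤ (m : ℝ) := by exact_mod_cast hgt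
      rw [hm', abs_le] at habs
      nlinarith [habs.2]
  rw [hm', hm0]
  simp

private lemma posreal_pow_one {z : ℂ} {k : ℕ} (hk : k ≠ 0) (hzk : z ^ k = 1)
    (harg : Complex.arg z = 0) : z = 1 := by
  obtain ⟨hre, him⟩ := Complex.arg_eq_zero_iff.mp harg
  have hz : z = ((z.re : ℝ) : ℂ) := Complex.ext rfl (by simpa using him)
  rw [hz] at hzk ⊢
  have : ((z.re ^ k : ℝ) : ℂ) = ((1 : ℝ) : ℂ) := by push_cast; simpa using hzk
  have hrk : z.re ^ k = 1 := Complex.ofReal_inj.mp this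
  have : z.re = 1 := by
    rcases lt_trichotomy z.re 1 with hlt | heq | hgt
    · have := pow_lt_one₀ hre hlt hk
      rw [hrk] at this; linarith
    · exact heq
    · have := one_lt_pow₀ hgt hk
      rw [hrk] at this; linarith
  rw [this]; simp
theorem upper_triangular_nilpotent_embeds (n s : ℕ)
    (N : Subgroup (Matrix.GeneralLinearGroup (Fin n) ℂ))
    (htri : ∀ M ∈ N, ∀ i j : Fin n, j < i → (M : Matrix (Fin n) (Fin n) ℂ) i j = 0)
    (hnil : (⊤ : Subgroup ↥N).lowerCentralSeries s = ⊥) :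
    ∃ (Γ : Type) (_ : Group Γ),
      (⊤ : Subgroup Γ).lowerCentralSeries s = ⊥ ∧
      (∀ g : Γ, ∀ k : ℕ, k ≠ 0 → g ^ k = 1 → g = 1) ∧
      ∃ f : ↥N →* (Multiplicative (Fin n → AddCircle (1 : ℝ))) × Γ,
        Function.Injective f := by
  classical
  have hlow : ∀ (g : ↥N) (i j : Fin n), j < i →
      ((g : Matrix.GeneralLinearGroup (Fin n) ℂ) : Matrix (Fin n) (Fin n) ℂ) i j = 0 :=
    fun g i j hij => htri (g : Matrix.GeneralLinearGroup (Fin n) ℂ) g.2 i j hij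
  have hdiag_ne : ∀ (g : ↥N) (i : Fin n),
      ((g : Matrix.GeneralLinearGroup (Fin n) ℂ) : Matrix (Fin n) (Fin n) ℂ) i i ≠ 0 := by
    intro g i
    have hdet : IsUnit (((g : Matrix.GeneralLinearGroup (Fin n) ℂ) :
        Matrix (Fin n) (Fin n) ℂ).det) :=
      (Matrix.isUnit_iff_isUnit_det _).mp ⟨(g : Matrix.GeneralLinearGroup (Fin n) ℂ), rfl⟩
    have htriang : (((g : Matrix.GeneralLinearGroup (Fin n) ℂ) :
        Matrix (Fin n) (Fin n) ℂ)).BlockTriangular id :=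
      fun i j hij => hlow g i j hij
    rw [Matrix.det_of_upperTriangular htriang] at hdet
    exact fun h0 => hdet.ne_zero (Finset.prod_eq_zero (Finset.mem_univ i) h0)
  -- diagonal monoid homs
  let d : Fin n → (↥N →* ℂ) := fun i =>
    { toFun := fun g => ((g : Matrix.GeneralLinearGroup (Fin n) ℂ) : Matrix (Fin n) (Fin n) ℂ) i i
      map_one' := by simp
      map_mul' := by
        intro a b
        show ((((a * b : ↥N) : Matrix.GeneralLinearGroup (Fin n) ℂ) :
            Matrix (Fin n) (Fin n) ℂ)) i i = _
        have hab : ((((a * b : ↥N) : Matrix.GeneralLinearGroup (Fin n) ℂ) :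
            Matrix (Fin n) (Fin n) ℂ))
            = ((a : Matrix.GeneralLinearGroup (Fin n) ℂ) : Matrix (Fin n) (Fin n) ℂ)
              * ((b : Matrix.GeneralLinearGroup (Fin n) ℂ) : Matrix (Fin n) (Fin n) ℂ) := rfl
        rw [hab, Matrix.mul_apply]
        apply Finset.sum_eq_single_of_mem i (Finset.mem_univ i)
        intro k _ hk
        rcases lt_or_gt_of_ne hk with hki | hki
        · rw [hlow a i k hki, zero_mul]
        · rw [hlow b k i hki, mul_zero] }
  let θfun : ↥N → (Fin n → AddCircle (1 : ℝ)) := fun g i =>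
    ((Complex.arg (d i g) / (2 * Real.pi) : ℝ) : AddCircle (1 : ℝ))
  let θ : ↥N →* Multiplicative (Fin n → AddCircle (1 : ℝ)) :=
    { toFun := fun g => Multiplicative.ofAdd (θfun g)
      map_one' := by
        have h0 : θfun 1 = 0 := by
          funext i
          show ((Complex.arg (d i 1) / (2 * Real.pi) : ℝ) : AddCircle (1 : ℝ)) = 0
          rw [map_one (d i), Complex.arg_one, zero_div]
          rfl
        show Multiplicative.ofAdd (θfun 1) = 1
        rw [h0]
        rfl
      map_mul' := by
        intro a b
        show Multiplicative.ofAdd (θfun (a * b))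
          = Multiplicative.ofAdd (θfun a) * Multiplicative.ofAdd (θfun b)
        rw [← ofAdd_add]
        congr 1
        funext i
        show ((Complex.arg (d i (a * b)) / (2 * Real.pi) : ℝ) : AddCircle (1 : ℝ)) = _
        rw [map_mul (d i)]
        exact argCircle_mul _ _ (hdiag_ne a i) (hdiag_ne b i) }
  -- the torsion subgroup
  set Tset : Set ↥N := {g : ↥N | ∃ k : ℕ, k ≠ 0 ∧ g ^ k = 1} with hTset
  set W : Subgroup ↥N := Subgroup.closure Tset with hW
  have hW1 : (⊤ : Subgroup ↥W).lowerCentralSeries s = ⊥ := by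
    have h := Subgroup.lowerCentralSeries_map_subtype_le W s
    rw [hnil, le_bot_iff, Subgroup.map_eq_bot_iff, Subgroup.ker_subtype, le_bot_iff] at h
    exact h
  have hW2 : Subgroup.closure ((Subtype.val : ↥W → ↥N) ⁻¹' Tset) = ⊤ :=
    Subgroup.closure_closure_coe_preimage
  have hW3 : ∀ g ∈ ((Subtype.val : ↥W → ↥N) ⁻¹' Tset), ∃ k : ℕ, k ≠ 0 ∧ g ^ k = 1 := by
    rintro g ⟨k, hk, hgk⟩
    refine ⟨k, hk, ?_⟩
    apply Subtype.ext
    rw [SubgroupClass.coe_pow]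
    exact hgk
  have hWtor := torsion_of_closure s ↥W inferInstance _ hW1 hW2 hW3
  have keymul : ∀ a b : ↥N, a ∈ Tset → b ∈ Tset → a * b ∈ Tset := by
    intro a b ha hb
    have haW : a ∈ W := Subgroup.subset_closure ha
    have hbW : b ∈ W := Subgroup.subset_closure hb
    obtain ⟨k, hk, hab⟩ := hWtor ⟨a * b, mul_mem haW hbW⟩
    refine ⟨k, hk, ?_⟩
    have := congrArg (Subtype.val : ↥W → ↥N) hab
    rw [SubgroupClass.coe_pow] at this
    simpa using this
  let T : Subgroup ↥N :=
    { carrier := Tset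
      one_mem' := ⟨1, one_ne_zero, one_pow 1⟩
      mul_mem' := fun {a b} ha hb => keymul a b ha hb
      inv_mem' := by
        rintro a ⟨k, hk, hak⟩
        exact ⟨k, hk, by rw [inv_pow, hak, inv_one]⟩ }
  haveI hTnormal : T.Normal := by
    constructor
    rintro a ⟨k, hk, hak⟩ g
    exact ⟨k, hk, by rw [conj_pow, hak, mul_one, mul_inv_cancel]⟩
  refine ⟨↥N ⧸ T, inferInstance, ?_, ?_, ?_⟩
  · rw [← my_lcs_map_surj (QuotientGroup.mk' T) (QuotientGroup.mk'_surjective T) s, hnil,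
      Subgroup.map_bot]
  · intro g k hk hgk
    obtain ⟨x, rfl⟩ := QuotientGroup.mk'_surjective T g
    have hxk : x ^ k ∈ T := by
      rw [← QuotientGroup.ker_mk' T, MonoidHom.mem_ker, map_pow]
      exact hgk
    obtain ⟨j, hj, hxj⟩ := hxk
    have hx : x ∈ T := ⟨k * j, Nat.mul_ne_zero hk hj, by rw [pow_mul]; exact hxj⟩
    exact (QuotientGroup.eq_one_iff x).mpr hx
  · refine ⟨θ.prod (QuotientGroup.mk' T), (injective_iff_map_eq_one _).mpr ?_⟩
    intro g hg
    have hθ : θ g = 1 := congrArg Prod.fst hg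
    have hT : g ∈ T := (QuotientGroup.eq_one_iff g).mp (congrArg Prod.snd hg)
    obtain ⟨k, hk, hgk⟩ := hT
    have hdiag1 : ∀ i : Fin n,
        ((g : Matrix.GeneralLinearGroup (Fin n) ℂ) : Matrix (Fin n) (Fin n) ℂ) i i = 1 := by
      intro i
      have hzk : (d i g) ^ k = 1 := by rw [← map_pow, hgk, map_one]
      have harg : Complex.arg (d i g) = 0 := by
        apply argCircle_eq_zero
        have h1 : θfun g = 0 := by
          have := congrArg Multiplicative.toAdd hθ
          exact this
        exact congrFun h1 i
      exact posreal_pow_one hk hzk harg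
    have hmk : ((g : Matrix.GeneralLinearGroup (Fin n) ℂ) : Matrix (Fin n) (Fin n) ℂ) ^ k = 1 := by
      have h1 : ((g ^ k : ↥N) : Matrix.GeneralLinearGroup (Fin n) ℂ) = 1 := by
        rw [hgk]; rfl
      have h2 := congrArg (fun u : Matrix.GeneralLinearGroup (Fin n) ℂ =>
        (u : Matrix (Fin n) (Fin n) ℂ)) h1
      simp only [SubgroupClass.coe_pow, Units.val_pow_eq_pow_val] at h2
      simpa using h2
    have hfin := unipotent_pow_eq_one
      ((g : Matrix.GeneralLinearGroup (Fin n) ℂ) : Matrix (Fin n) (Fin n) ℂ)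
      (fun i j hij => hlow g i j hij) hdiag1 hk hmk
    exact Subtype.ext (Units.ext hfin)
end

section
/- Let s ≥ 2, let G be an s-step nilpotent group, and let H be a subgroup of G containing the commutator subgroup [G,G]. If H/[G,G] is cyclic, then H is nilpotent of step at most s − 1. -/
/-!
Modulo `γ₃(G)` the commutator subgroup is central, and `H` lies in `⟨x⟩ · [G,G]` for some `x`;
so the image of `H` in `G / γ₃(G)` is generated by one element together with central elements,
hence abelian. Thus `[H,H] ≤ γ₃(G)`, and inductively `γ_{n+1}(H) ≤ γ_{n+2}(G)`; for `n = s - 2`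
this is `γ_{s-1}(H) ≤ γ_s(G) = 1`.
-/

open scoped commutatorElement

namespace Subgroup

variable {G : Type*} [Group G]

theorem commutator_sup_center_eq_bot (A : Subgroup G) [IsMulCommutative A] :
    ⁅A ⊔ center G, A ⊔ center G⁆ = ⊥ := by
  rw [commutator_eq_bot_iff_le_centralizer]
  refine sup_le ?_ (center_le_centralizer _)
  rw [le_centralizer_iff]
  exact sup_le (le_centralizer A) (center_le_centralizer _)

theorem map_mk'_le_center_of_commutator_le {K N : Subgroup G} [N.Normal] (h : ⁅K, ⊤⁆ ≤ N) :
    K.map (QuotientGroup.mk' N) ≤ center (G ⧸ N) := by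
  rintro _ ⟨c, hc, rfl⟩
  rw [mem_center_iff]
  intro q
  induction q using QuotientGroup.induction_on with | H g => ?_
  have hcg : Commute (QuotientGroup.mk' N c) (QuotientGroup.mk' N g) := by
    rw [← commutatorElement_eq_one_iff_commute, ← map_commutatorElement, QuotientGroup.mk'_apply,
      QuotientGroup.eq_one_iff]
    exact h (commutator_mem_commutator hc (mem_top g))
  exact hcg.eq.symm

theorem commutator_le_of_le_sup {H A K N : Subgroup G} [N.Normal] [IsMulCommutative A]
    (hK : ⁅K, ⊤⁆ ≤ N) (hH : H ≤ A ⊔ K) : ⁅H, H⁆ ≤ N := by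
  let π := QuotientGroup.mk' N
  have hπH : H.map π ≤ A.map π ⊔ center (G ⧸ N) := by
    calc H.map π ≤ (A ⊔ K).map π := map_mono hH
      _ = A.map π ⊔ K.map π := map_sup A K π
      _ ≤ A.map π ⊔ center (G ⧸ N) := sup_le_sup_left (map_mk'_le_center_of_commutator_le hK) _
  rw [← QuotientGroup.ker_mk' N, ← map_eq_bot_iff, map_commutator, eq_bot_iff,
    ← commutator_sup_center_eq_bot (A.map π)]
  exact commutator_mono hπH hπH

theorem le_zpowers_sup_commutator {H : Subgroup G} {g : G}
    (hH : H.map Abelianization.of = zpowers (Abelianization.of g)) :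
    H ≤ zpowers g ⊔ _root_.commutator G := by
  rw [← Abelianization.ker_of, ← comap_map_eq, MonoidHom.map_zpowers, ← hH]
  exact le_comap_map _ H

theorem lowerCentralSeries_succ_le_of_commutator_le {H : Subgroup G} {k : ℕ}
    (h : ⁅H, H⁆ ≤ (⊤ : Subgroup G).lowerCentralSeries (k + 1)) :
    ∀ n, H.lowerCentralSeries (n + 1) ≤ (⊤ : Subgroup G).lowerCentralSeries (k + n + 1)
  | 0 => h
  | n + 1 => commutator_mono (lowerCentralSeries_succ_le_of_commutator_le h n) le_top

end Subgroup

open Subgroup in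
theorem cyclic_over_commutator_lower_step_general {G : Type*} [Group G] (s : ℕ) (hs : 2 ≤ s)
    (hG : (⊤ : Subgroup G).lowerCentralSeries s = ⊥)
    (H : Subgroup G)
    (hcyc : ∃ x : Abelianization G, Subgroup.map Abelianization.of H = Subgroup.zpowers x) :
    (⊤ : Subgroup ↥H).lowerCentralSeries (s - 1) = ⊥ := by
  obtain ⟨t, rfl⟩ : ∃ t, s = t + 2 := ⟨s - 2, by omega⟩
  obtain ⟨x, hx⟩ := hcyc
  obtain ⟨g, rfl⟩ := QuotientGroup.mk_surjective x
  have hHH : ⁅H, H⁆ ≤ (⊤ : Subgroup G).lowerCentralSeries 2 :=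
    commutator_le_of_le_sup le_rfl (le_zpowers_sup_commutator hx)
  have hlcs := lowerCentralSeries_succ_le_of_commutator_le hHH t
  rw [Nat.add_comm 1 t, hG] at hlcs
  show (⊤ : Subgroup H).lowerCentralSeries (t + 1) = ⊥
  rw [← map_subtype_inj, Subgroup.map_bot, top_subtype_lowerCentralSeries, eq_bot_iff]
  exact hlcs

theorem cyclic_over_commutator_lower_step {G : Type*} [Group G] (s : ℕ) (hs : 2 ≤ s)
    (hG : (⊤ : Subgroup G).lowerCentralSeries s = ⊥)
    (H : Subgroup G) (hcomm : commutator G ≤ H)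
    (hcyc : ∃ x : Abelianization G, Subgroup.map Abelianization.of H = Subgroup.zpowers x) :
    (⊤ : Subgroup ↥H).lowerCentralSeries (s - 1) = ⊥ :=
  cyclic_over_commutator_lower_step_general s hs hG H hcyc
end
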